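/- The function f is even and all its Fourier sine coefficients vanish: b_n(f) = 0 for all n ≥ 1, and a_0(f) = 0. Moreover, for n ≥ 1 the Fourier cosine coefficients are given blockwise: if q_k − p_k ≤ n ≤ q_k − 1 for some k then a_n(f) = a_k/(q_k − n); if q_k + 1 ≤ n ≤ q_k + p_k for some k then a_n(f) = −a_k/(n − q_k); and a_n(f) = 0 for all other n (including n = q_k). -/

import Mathlib

/-!
Each `T p q` is an even cosine polynomial with coefficient `1/m` at frequency `q - m` and `-1/m` at
`q + m` (`1 ≤ m ≤ p`), so by orthogonality its Fourier coefficients can be read off and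
`∫ T² = 2π Σ 1/m² ≤ 4π`. This `L²` bound, uniform in `p` and `q`, bounds `∫ |T p q · cos(n·)|`
uniformly, so the series for `f` can be integrated termwise against `cos(n·)`. The separation
hypothesis makes the frequency blocks `[q_k - p_k, q_k + p_k]` pairwise disjoint, hence at most one
term contributes to each coefficient of `f`.
-/

open Finset Real Filter

noncomputable def T (p q : ℕ) (x : ℝ) : ℝ :=
  (∑ m ∈ Finset.Icc 1 p, Real.cos (((q : ℝ) - (m : ℝ)) * x) / (m : ℝ))
    - ∑ m ∈ Finset.Icc 1 p, Real.cos (((q : ℝ) + (m : ℝ)) * x) / (m : ℝ)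

noncomputable def fourierA (g : ℝ → ℝ) (n : ℕ) : ℝ :=
  (1 / Real.pi) * ∫ t in (-Real.pi)..Real.pi, g t * Real.cos ((n : ℝ) * t)

noncomputable def fourierB (g : ℝ → ℝ) (n : ℕ) : ℝ :=
  (1 / Real.pi) * ∫ t in (-Real.pi)..Real.pi, g t * Real.sin ((n : ℝ) * t)

open MeasureTheory

lemma fourierB_eq_zero_of_even {g : ℝ → ℝ} (hg : ∀ x, g (-x) = g x) (n : ℕ) :
    fourierB g n = 0 := by
  have h := intervalIntegral.integral_comp_neg (a := -π) (b := π) fun t => g t * sin (n * t)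
  simp only [neg_neg, hg, mul_neg, sin_neg, intervalIntegral.integral_neg] at h
  rw [fourierB, show ∫ t in -π..π, g t * sin (n * t) = 0 by linarith, mul_zero]

lemma integral_cos_int_mul (k : ℤ) :
    ∫ t in -π..π, cos (k * t) = if k = 0 then 2 * π else 0 := by
  split_ifs with hk
  · simp [hk, two_mul]
  · rw [intervalIntegral.integral_comp_mul_left (fun t => cos t) (by exact_mod_cast hk),
      integral_cos, mul_neg, sin_neg, sin_int_mul_pi]
    simp

lemma integral_cos_nat_mul_mul_cos_nat_mul {j : ℕ} (hj : 0 < j) (n : ℕ) :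
    ∫ t in -π..π, cos (j * t) * cos (n * t) = if j = n then π else 0 := by
  have hprod : ∀ t : ℝ, cos (j * t) * cos (n * t)
      = (cos (((j - n : ℤ) : ℝ) * t) + cos (((j + n : ℤ) : ℝ) * t)) / 2 := fun t => by
    push_cast
    rw [sub_mul, add_mul, ← two_mul_cos_mul_cos]
    ring
  have hjn : (j : ℤ) + n ≠ 0 := by omega
  simp_rw [hprod]
  rw [intervalIntegral.integral_div,
    intervalIntegral.integral_add (Continuous.intervalIntegrable (by fun_prop) _ _)
      (Continuous.intervalIntegrable (by fun_prop) _ _),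
    integral_cos_int_mul, integral_cos_int_mul]
  simp only [sub_eq_zero, Nat.cast_inj, hjn, if_false]
  split_ifs <;> ring

lemma T_neg (p q : ℕ) (x : ℝ) : T p q (-x) = T p q x := by
  simp only [T, mul_neg, cos_neg]

lemma continuous_T (p q : ℕ) : Continuous (T p q) := by
  unfold T
  fun_prop

lemma T_eq_sum {p q : ℕ} (hpq : p ≤ q) (x : ℝ) :
    T p q x = ∑ m ∈ Icc 1 p, (cos (↑(q - m) * x) - cos (↑(q + m) * x)) / m := by
  rw [T, ← sum_sub_distrib]
  refine sum_congr rfl fun m hm => ?_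
  rw [Nat.cast_sub (by grind), Nat.cast_add, sub_div]

-- The cosine coefficients of `T p q`; with truncated subtraction at most one term is nonzero.
noncomputable def coeffT (p q n : ℕ) : ℝ :=
  (if q - n ∈ Icc 1 p then ((q - n : ℕ) : ℝ)⁻¹ else 0)
    - if n - q ∈ Icc 1 p then ((n - q : ℕ) : ℝ)⁻¹ else 0

lemma integral_T_mul_cos {p q : ℕ} (hpq : p < q) (n : ℕ) :
    ∫ t in -π..π, T p q t * cos (n * t) = π * coeffT p q n := by
  have hterm : ∀ m ∈ Icc 1 p,
      ∫ t in -π..π, (cos (↑(q - m) * t) - cos (↑(q + m) * t)) / m * cos (n * t)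
        = (if q - n = m then π / m else 0) - (if n - q = m then π / m else 0) := by
    intro m hm
    obtain ⟨hm1, hmp⟩ := mem_Icc.mp hm
    have hsplit : ∀ t : ℝ, (cos (↑(q - m) * t) - cos (↑(q + m) * t)) / m * cos (n * t)
        = (cos (↑(q - m) * t) * cos (n * t) - cos (↑(q + m) * t) * cos (n * t)) / m :=
      fun t => by ring
    simp_rw [hsplit]
    rw [intervalIntegral.integral_div,
      intervalIntegral.integral_sub (Continuous.intervalIntegrable (by fun_prop) _ _)
      (Continuous.intervalIntegrable (by fun_prop) _ _),
      integral_cos_nat_mul_mul_cos_nat_mul (by omega),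
      integral_cos_nat_mul_mul_cos_nat_mul (by omega)]
    have hsub : q - m = n ↔ q - n = m := by omega
    have hadd : q + m = n ↔ n - q = m := by omega
    simp only [hsub, hadd]
    split_ifs <;> ring
  simp_rw [T_eq_sum hpq.le, sum_mul]
  rw [intervalIntegral.integral_finsetSum fun m _ =>
    Continuous.intervalIntegrable (by fun_prop) _ _, sum_congr rfl hterm, sum_sub_distrib,
    sum_ite_eq, sum_ite_eq, coeffT]
  split_ifs <;> ring

lemma coeffT_sub {p q m : ℕ} (hm : m ∈ Icc 1 p) (hmq : m ≤ q) :
    coeffT p q (q - m) = (m : ℝ)⁻¹ := by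
  have : q - m - q = 0 := by omega
  simp [coeffT, Nat.sub_sub_self hmq, hm, this]

lemma coeffT_add {p q m : ℕ} (hm : m ∈ Icc 1 p) : coeffT p q (q + m) = -(m : ℝ)⁻¹ := by
  simp [coeffT, hm]

lemma coeffT_of_lt {p q n : ℕ} (h1 : q - p ≤ n) (h2 : n < q) :
    coeffT p q n = ((q : ℝ) - n)⁻¹ := by
  have hmem : q - n ∈ Icc 1 p := mem_Icc.mpr ⟨by omega, by omega⟩
  simp [coeffT, hmem, Nat.sub_eq_zero_of_le h2.le, Nat.cast_sub h2.le]

lemma coeffT_of_gt {p q n : ℕ} (h1 : q < n) (h2 : n ≤ q + p) :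
    coeffT p q n = -((n : ℝ) - q)⁻¹ := by
  have hmem : n - q ∈ Icc 1 p := mem_Icc.mpr ⟨by omega, by omega⟩
  simp [coeffT, hmem, Nat.sub_eq_zero_of_le h1.le, Nat.cast_sub h1.le]

lemma coeffT_eq_zero {p q n : ℕ} (h : n = q ∨ n < q - p ∨ q + p < n) : coeffT p q n = 0 := by
  have h1 : q - n ∉ Icc 1 p := by rw [mem_Icc]; omega
  have h2 : n - q ∉ Icc 1 p := by rw [mem_Icc]; omega
  simp [coeffT, h1, h2]

lemma integral_T_sq {p q : ℕ} (hpq : p < q) :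
    ∫ t in -π..π, T p q t ^ 2 = 2 * π * ∑ m ∈ Icc 1 p, ((m : ℝ) ^ 2)⁻¹ := by
  have hexpand : ∀ t, T p q t ^ 2
      = ∑ m ∈ Icc 1 p, (T p q t * cos (↑(q - m) * t) - T p q t * cos (↑(q + m) * t)) / m := by
    intro t
    rw [sq]
    nth_rewrite 2 [T_eq_sum hpq.le]
    rw [mul_sum]
    exact sum_congr rfl fun m _ => by ring
  have hT := continuous_T p q
  simp_rw [hexpand]
  rw [intervalIntegral.integral_finsetSum fun m _ =>
    Continuous.intervalIntegrable (by fun_prop) _ _, mul_sum]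
  refine sum_congr rfl fun m hm => ?_
  rw [intervalIntegral.integral_div,
    intervalIntegral.integral_sub (Continuous.intervalIntegrable (by fun_prop) _ _)
      (Continuous.intervalIntegrable (by fun_prop) _ _),
    integral_T_mul_cos hpq, integral_T_mul_cos hpq, coeffT_sub hm (by grind), coeffT_add hm]
  have : (m : ℝ) ≠ 0 := Nat.cast_ne_zero.mpr (by grind)
  field_simp
  ring

lemma integral_abs_T_mul_cos_le {p q : ℕ} (hpq : p < q) (n : ℕ) :
    ∫ t in -π..π, |T p q t * cos (n * t)| ≤ 3 * π := by
  have hT := continuous_T p q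
  have hpoint : ∀ t, |T p q t * cos (n * t)| ≤ (T p q t ^ 2 + 1) / 2 := fun t => by
    have hcos : |T p q t * cos (n * t)| ≤ |T p q t| := by
      rw [abs_mul]
      exact mul_le_of_le_one_right (abs_nonneg _) (abs_cos_le_one _)
    nlinarith [two_mul_le_add_sq |T p q t| 1, sq_abs (T p q t)]
  have hsum : ∑ m ∈ Icc 1 p, ((m : ℝ) ^ 2)⁻¹ ≤ 2 := by
    have hIcc : Icc 1 p = Ioo 0 (p + 1) := by ext; simp; omega
    simpa [hIcc] using sum_Ioo_inv_sq_le (α := ℝ) 0 (p + 1)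
  calc ∫ t in -π..π, |T p q t * cos (n * t)|
      ≤ ∫ t in -π..π, (T p q t ^ 2 + 1) / 2 :=
        intervalIntegral.integral_mono_on (by linarith [pi_pos])
          (Continuous.intervalIntegrable (by fun_prop) _ _)
          (Continuous.intervalIntegrable (by fun_prop) _ _) fun t _ => hpoint t
    _ = (2 * π * ∑ m ∈ Icc 1 p, ((m : ℝ) ^ 2)⁻¹ + 2 * π) / 2 := by
        rw [intervalIntegral.integral_div, intervalIntegral.integral_add
          (Continuous.intervalIntegrable (by fun_prop) _ _) intervalIntegrable_const,
          integral_T_sq hpq, intervalIntegral.integral_const, smul_eq_mul]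
        ring
    _ ≤ 3 * π := by nlinarith [pi_pos]

lemma integral_tsum_mul_of_integral_abs_le {ι : Type*} [Countable ι] {a : ι → ℝ}
    {g : ι → ℝ → ℝ} {α β C : ℝ} (hαβ : α ≤ β) (ha : Summable a)
    (hg : ∀ i, IntervalIntegrable (g i) volume α β) (hC : ∀ i, ∫ t in α..β, |g i t| ≤ C) :
    ∫ t in α..β, ∑' i, a i * g i t = ∑' i, a i * ∫ t in α..β, g i t := by
  simp_rw [intervalIntegral.integral_of_le hαβ, ← integral_const_mul] at hC ⊢
  refine (integral_tsum_of_summable_integral_norm (fun i => (hg i).1.const_mul (a i)) ?_).symm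
  refine Summable.of_nonneg_of_le (fun i => integral_nonneg fun _ => norm_nonneg _) (fun i => ?_)
    (ha.abs.mul_right C)
  simp_rw [norm_mul, Real.norm_eq_abs, integral_const_mul]
  exact mul_le_mul_of_nonneg_left (hC i) (abs_nonneg _)

lemma fourierA_tsum_mul_T {p q : ℕ → ℕ} {a : ℕ → ℝ} (hpq : ∀ k, p k < q k) (ha : Summable a)
    (n : ℕ) :
    fourierA (fun x => ∑' k, a k * T (p k) (q k) x) n = ∑' k, a k * coeffT (p k) (q k) n := by
  have hswap := integral_tsum_mul_of_integral_abs_le (neg_le_self pi_pos.le) ha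
    (g := fun k t => T (p k) (q k) t * cos (n * t))
    (fun k => Continuous.intervalIntegrable (by have := continuous_T (p k) (q k); fun_prop) _ _)
    fun k => integral_abs_T_mul_cos_le (hpq k) n
  simp only [integral_T_mul_cos (hpq _)] at hswap
  simp_rw [fourierA, ← tsum_mul_right, mul_assoc, hswap, ← tsum_mul_left]
  congr 1 with k
  field_simp [pi_pos.ne']

lemma add_lt_sub_of_lt {p q : ℕ → ℕ} (hsep : ∀ k, q k + p k < q (k + 1) - p (k + 1)) {j k : ℕ}
    (hjk : j < k) : q j + p j < q k - p k := by
  induction k, hjk using Nat.le_induction with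
  | base => exact hsep j
  | succ k _ ih => have := hsep k; omega

lemma tsum_mul_coeffT_eq {p q : ℕ → ℕ} (hsep : ∀ k, q k + p k < q (k + 1) - p (k + 1))
    (a : ℕ → ℝ) {k n : ℕ} (h1 : q k - p k ≤ n) (h2 : n ≤ q k + p k) :
    ∑' j, a j * coeffT (p j) (q j) n = a k * coeffT (p k) (q k) n := by
  refine tsum_eq_single k fun j hj => ?_
  rw [coeffT_eq_zero, mul_zero]
  rcases hj.lt_or_gt with h | h <;> have := add_lt_sub_of_lt hsep h <;> omega

theorem stmt_10_general (p q : ℕ → ℕ) (a : ℕ → ℝ)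
    (hpq : ∀ k, 1 < p k ∧ p k < q k)
    (hsep : ∀ k, q k + p k < q (k + 1) - p (k + 1))
    (hsum : Summable a)
    (f : ℝ → ℝ) (hf : ∀ x, f x = ∑' k, a k * T (p k) (q k) x) :
    (∀ x : ℝ, f (-x) = f x)
      ∧ (∀ n : ℕ, 1 ≤ n → fourierB f n = 0)
      ∧ fourierA f 0 = 0
      ∧ (∀ n : ℕ, 1 ≤ n →
          (∀ k, q k - p k ≤ n → n ≤ q k - 1 →
            fourierA f n = a k / ((q k : ℝ) - (n : ℝ)))
          ∧ (∀ k, q k + 1 ≤ n → n ≤ q k + p k →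
            fourierA f n = -(a k / ((n : ℝ) - (q k : ℝ))))
          ∧ ((∀ k, n = q k ∨ n < q k - p k ∨ q k + p k < n) → fourierA f n = 0)) := by
  obtain rfl : f = fun x => ∑' k, a k * T (p k) (q k) x := funext hf
  have heven : ∀ x, ∑' k, a k * T (p k) (q k) (-x) = ∑' k, a k * T (p k) (q k) x := by
    simp only [T_neg, implies_true]
  have hA := fourierA_tsum_mul_T (fun k => (hpq k).2) hsum
  refine ⟨heven, fun n _ => fourierB_eq_zero_of_even heven n, ?_, fun n hn => ⟨?_, ?_, ?_⟩⟩
  · have hzero : ∀ k, coeffT (p k) (q k) 0 = 0 := fun k => coeffT_eq_zero (by grind)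
    simp [hA, hzero]
  · intro k h1 h2
    rw [hA, tsum_mul_coeffT_eq hsep a h1 (by omega), coeffT_of_lt h1 (by omega), div_eq_mul_inv]
  · intro k h1 h2
    rw [hA, tsum_mul_coeffT_eq hsep a (by omega) h2, coeffT_of_gt h1 h2, div_eq_mul_inv, mul_neg]
  · intro hout
    simp [hA, coeffT_eq_zero (hout _)]

/-- `f` is even, all its Fourier sine coefficients vanish, `a_0(f) = 0`, and for `n ≥ 1` the
cosine coefficients are given blockwise: `a_n(f) = a_k/(q_k − n)` if `q_k − p_k ≤ n ≤ q_k − 1`,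
`a_n(f) = −a_k/(n − q_k)` if `q_k + 1 ≤ n ≤ q_k + p_k`, and `a_n(f) = 0` for all other `n`
(including `n = q_k`). -/
theorem stmt_10 (p q : ℕ → ℕ) (a : ℕ → ℝ)
    (hpq : ∀ k, 1 < p k ∧ p k < q k)
    (hsep : ∀ k, q k + p k < q (k + 1) - p (k + 1))
    (hapos : ∀ k, 0 < a k)
    (hsum : Summable a)
    (hliminf : 0 < Filter.liminf (fun k => a k * Real.log (p k)) Filter.atTop)
    (f : ℝ → ℝ) (hf : ∀ x, f x = ∑' k, a k * T (p k) (q k) x) :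
    (∀ x : ℝ, f (-x) = f x)
      ∧ (∀ n : ℕ, 1 ≤ n → fourierB f n = 0)
      ∧ fourierA f 0 = 0
      ∧ (∀ n : ℕ, 1 ≤ n →
          (∀ k, q k - p k ≤ n → n ≤ q k - 1 →
            fourierA f n = a k / ((q k : ℝ) - (n : ℝ)))
          ∧ (∀ k, q k + 1 ≤ n → n ≤ q k + p k →
            fourierA f n = -(a k / ((n : ℝ) - (q k : ℝ))))
          ∧ ((∀ k, n = q k ∨ n < q k - p k ∨ q k + p k < n) → fourierA f n = 0)) :=
  stmt_10_general p q a hpq hsep hsum f hf
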